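/- arXiv:2411.13820 — 2 statements merged into one kernel-verified Lean document; each statement's English description precedes it below -/
import Mathlib

section
/- For L = 2 and x ≥ 1, the number of pairs (i_1, i_2) of positive integers with i_1·i_2 ≤ x equals ∑_{i=1}^{⌊x⌋} ⌊x/i⌋, and satisfies |∑_{i=1}^{⌊x⌋} ⌊x/i⌋ − x ln x − (2γ − 1)x| = O(√x), where γ is the Euler–Mascheroni constant. In particular it is asymptotic to x ln x. -/
/-!
Counting the lattice points `(i, j)` with `i * j ≤ x` column by column gives `∑ ⌊x / i⌋`.
Dirichlet's hyperbola method: every such point has `i ≤ K` or `j ≤ K`, where `K = ⌊√x⌋`, so by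
inclusion–exclusion the sum equals `2 ∑_{i ≤ K} ⌊x / i⌋ - K²`. Dropping the floors costs `O(K)`,
and `H_K = log √x + γ + O(1 / K)`, hence `2 x H_K - K² = x log x + (2γ - 1) x + O(√x)`.
Since `x = o(x log x)`, the sum is asymptotic to `x log x`.
-/

open Finset Filter Real Asymptotics

namespace Nat

lemma filter_mul_le_eq_Icc {N i : ℕ} (hi : 0 < i) :
    {j ∈ Icc 1 N | i * j ≤ N} = Icc 1 (N / i) := by
  ext j
  simp only [mem_filter, mem_Icc, Nat.le_div_iff_mul_le hi, mul_comm j]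
  exact ⟨fun h => ⟨h.1.1, h.2⟩, fun h => ⟨⟨h.1, (Nat.le_mul_of_pos_left j hi).trans h.2⟩, h.2⟩⟩

lemma card_filter_mul_le (M N : ℕ) :
    #{p ∈ Icc 1 M ×ˢ Icc 1 N | p.1 * p.2 ≤ N} = ∑ i ∈ Icc 1 M, N / i := by
  rw [card_filter, sum_product]
  refine sum_congr rfl fun i hi => ?_
  rw [← card_filter, filter_mul_le_eq_Icc (mem_Icc.1 hi).1, card_Icc, Nat.add_sub_cancel]

lemma card_pos_mul_le_eq_sum_floor_div (x : ℝ) :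
    Nat.card {p : ℕ × ℕ // 0 < p.1 ∧ 0 < p.2 ∧ (p.1 * p.2 : ℝ) ≤ x} =
      ∑ i ∈ Icc 1 ⌊x⌋₊, ⌊x / i⌋₊ := by
  simp_rw [Nat.floor_div_natCast, ← card_filter_mul_le, ← Set.ncard_coe_finset]
  rw [← Nat.card_coe_set_eq]
  congr
  ext ⟨a, b⟩
  simp only [Set.mem_ofPred_eq, coe_filter, mem_product, mem_Icc]
  constructor
  · rintro ⟨ha, hb, hab⟩
    have hle : a * b ≤ ⌊x⌋₊ := (Nat.le_floor_iff' (by positivity)).2 (by exact_mod_cast hab)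
    exact ⟨⟨⟨ha, (Nat.le_mul_of_pos_right a hb).trans hle⟩, hb,
      (Nat.le_mul_of_pos_left b ha).trans hle⟩, hle⟩
  · rintro ⟨⟨⟨ha, -⟩, hb, -⟩, hle⟩
    exact ⟨ha, hb, by exact_mod_cast (Nat.le_floor_iff' (by positivity)).1 hle⟩

lemma sum_div_add_sqrt_mul_sqrt (N : ℕ) :
    ∑ i ∈ Icc 1 N, N / i + sqrt N * sqrt N = 2 * ∑ i ∈ Icc 1 (sqrt N), N / i := by
  set K := sqrt N
  have hKN : K ≤ N := sqrt_le_self N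
  set A := {p ∈ Icc 1 K ×ˢ Icc 1 N | p.1 * p.2 ≤ N}
  set B := {p ∈ Icc 1 N ×ˢ Icc 1 K | p.1 * p.2 ≤ N}
  have hunion : A ∪ B = {p ∈ Icc 1 N ×ˢ Icc 1 N | p.1 * p.2 ≤ N} := by
    ext ⟨a, b⟩
    simp only [A, B, mem_union, mem_filter, mem_product, mem_Icc]
    have : a * b ≤ N → a ≤ K ∨ b ≤ K := by
      contrapose!
      rintro ⟨ha, hb⟩
      exact (lt_succ_sqrt N).trans_le (Nat.mul_le_mul ha hb)
    grind
  have hinter : A ∩ B = Icc 1 K ×ˢ Icc 1 K := by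
    ext ⟨a, b⟩
    simp only [A, B, mem_inter, mem_filter, mem_product, mem_Icc]
    have : a ≤ K → b ≤ K → a * b ≤ N := fun ha hb => (Nat.mul_le_mul ha hb).trans (sqrt_le N)
    grind
  have hswap : #B = #A := by
    refine card_bij' (fun p _ => p.swap) (fun p _ => p.swap) ?_ ?_ (by simp) (by simp) <;>
    · rintro ⟨a, b⟩ h
      simp only [A, B, mem_filter, mem_product, Prod.swap] at h ⊢
      grind
  have := card_union_add_card_inter A B
  rw [hunion, hinter, hswap, card_product, card_Icc, card_filter_mul_le, card_filter_mul_le] at this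
  simpa [two_mul] using this

end Nat

lemma sum_floor_div_eq_two_mul_sub (y : ℝ) :
    ∑ i ∈ Icc 1 ⌊y⌋₊, (⌊y / i⌋₊ : ℝ) =
      2 * ∑ i ∈ Icc 1 (Nat.sqrt ⌊y⌋₊), (⌊y / i⌋₊ : ℝ) - (Nat.sqrt ⌊y⌋₊ : ℝ) ^ 2 := by
  have h := congrArg (Nat.cast : ℕ → ℝ) (Nat.sum_div_add_sqrt_mul_sqrt ⌊y⌋₊)
  simp_rw [Nat.floor_div_natCast]
  push_cast at h
  linarith

lemma abs_sum_floor_div_sub_mul_harmonic_le {y : ℝ} (hy : 0 ≤ y) (n : ℕ) :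
    |∑ i ∈ Icc 1 n, (⌊y / i⌋₊ : ℝ) - y * harmonic n| ≤ n := by
  have hfloor (a : ℝ) (ha : 0 ≤ a) : |(⌊a⌋₊ : ℝ) - a| ≤ 1 := by
    rw [abs_sub_comm, abs_of_nonneg (sub_nonneg.2 (Nat.floor_le ha))]
    linarith [Nat.lt_floor_add_one a]
  have hH : y * harmonic n = ∑ i ∈ Icc 1 n, y / i := by
    simp [harmonic_eq_sum_Icc, mul_sum, div_eq_mul_inv]
  rw [hH, ← sum_sub_distrib]
  calc |∑ i ∈ Icc 1 n, ((⌊y / i⌋₊ : ℝ) - y / i)|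
      ≤ ∑ i ∈ Icc 1 n, |(⌊y / i⌋₊ : ℝ) - y / i| := abs_sum_le_sum_abs _ _
    _ ≤ ∑ _i ∈ Icc 1 n, (1 : ℝ) := sum_le_sum fun i _ => hfloor _ (by positivity)
    _ = n := by simp

lemma abs_harmonic_sub_log_sub_eulerMascheroniConstant_le {n : ℕ} (hn : 0 < n) {t : ℝ}
    (ht₁ : n ≤ t) (ht₂ : t ≤ n + 1) :
    |harmonic n - log t - eulerMascheroniConstant| ≤ 1 / n := by
  have hn' : (0 : ℝ) < n := by exact_mod_cast hn
  have hlow : harmonic n - log (n + 1) < eulerMascheroniConstant :=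
    eulerMascheroniSeq_lt_eulerMascheroniConstant n
  have hup : eulerMascheroniConstant < harmonic n - log n := by
    simpa [eulerMascheroniSeq', hn.ne'] using eulerMascheroniConstant_lt_eulerMascheroniSeq' n
  have hgap : log (n + 1) - log n ≤ 1 / n := by
    rw [← log_div (by positivity) hn'.ne']
    calc log ((n + 1) / n) ≤ (n + 1) / n - 1 := log_le_sub_one_of_pos (by positivity)
      _ = 1 / n := by field_simp; ring
  have := log_le_log hn' ht₁
  have := log_le_log (hn'.trans_le ht₁) ht₂
  rw [abs_le]
  constructor <;> linarith

theorem abs_sum_floor_div_sub_le (y : ℝ) (hy : 1 ≤ y) :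
    |∑ i ∈ Icc 1 ⌊y⌋₊, (⌊y / i⌋₊ : ℝ) - y * log y - (2 * eulerMascheroniConstant - 1) * y|
      ≤ 8 * √y := by
  set K := Nat.sqrt ⌊y⌋₊
  set s := √y
  have hy₀ : 0 ≤ y := by linarith
  have hs : s ^ 2 = y := sq_sqrt hy₀
  have hKs : (K : ℝ) ≤ s :=
    Real.nat_sqrt_le_real_sqrt.trans (sqrt_le_sqrt (Nat.floor_le hy₀))
  have hsK : s < K + 1 := by
    have : (⌊y⌋₊ : ℝ) + 1 ≤ (K + 1) ^ 2 := by exact_mod_cast Nat.lt_succ_sqrt' ⌊y⌋₊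
    rw [sqrt_lt' (by positivity)]
    linarith [Nat.lt_floor_add_one y]
  have hK : 0 < K := Nat.sqrt_pos.2 (Nat.floor_pos.2 hy)
  have hK₁ : (1 : ℝ) ≤ K := by exact_mod_cast hK
  have hlog : log y = 2 * log s := by rw [← hs, log_pow]; norm_num
  have hT := abs_sum_floor_div_sub_mul_harmonic_le hy₀ K
  have hH := abs_harmonic_sub_log_sub_eulerMascheroniConstant_le hK hKs hsK.le
  set T := ∑ i ∈ Icc 1 K, (⌊y / i⌋₊ : ℝ)
  set H : ℝ := (harmonic K : ℝ)
  set γ := eulerMascheroniConstant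
  have hKy : (K : ℝ) ^ 2 ≤ y := hs ▸ pow_le_pow_left₀ (by positivity) hKs 2
  rw [sum_floor_div_eq_two_mul_sub, hlog]
  calc |2 * T - K ^ 2 - y * (2 * log s) - (2 * γ - 1) * y|
      = |2 * (T - y * H) + 2 * y * (H - log s - γ) + (y - K ^ 2)| := by ring_nf
    _ ≤ 2 * |T - y * H| + 2 * y * |H - log s - γ| + (y - K ^ 2) := by
        refine (abs_add_three _ _ _).trans_eq ?_
        rw [abs_mul, abs_mul, abs_of_nonneg (by positivity : (0 : ℝ) ≤ 2 * y),
          abs_of_nonneg (sub_nonneg.2 hKy), abs_two]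
    _ ≤ 2 * K + 2 * y * (1 / K) + (y - K ^ 2) := by gcongr
    _ ≤ 8 * s := by
        rw [← hs]
        have : s ^ 2 / K ≤ 2 * s := by
          rw [div_le_iff₀ (by positivity)]
          nlinarith
        have : s ^ 2 - K ^ 2 ≤ 2 * s := by nlinarith
        have : 2 * s ^ 2 * (1 / K) = 2 * (s ^ 2 / K) := by ring
        linarith

lemma tendsto_div_mul_log_of_sub_isBigO {f : ℝ → ℝ}
    (hf : (fun y => f y - y * log y) =O[atTop] id) :
    Tendsto (fun y => f y / (y * log y)) atTop (nhds 1) := by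
  have hid : (fun y : ℝ => y) =o[atTop] fun y => y * log y := by
    simpa only [mul_one] using
      (isBigO_refl (fun y : ℝ => y) atTop).mul_isLittleO (isLittleO_const_log_atTop (c := 1))
  refine (isEquivalent_iff_tendsto_one ?_).1 (hf.trans_isLittleO hid)
  filter_upwards [eventually_gt_atTop 1] with y hy
  exact mul_ne_zero (by positivity) (log_pos hy).ne'

theorem dirichlet_divisor_general (x : ℝ) :
    (Nat.card {p : ℕ × ℕ // 0 < p.1 ∧ 0 < p.2 ∧ (p.1 * p.2 : ℝ) ≤ x} =
      ∑ i ∈ Finset.Icc 1 ⌊x⌋₊, ⌊x / (i : ℝ)⌋₊) ∧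
    (∃ C : ℝ, ∀ y : ℝ, 1 ≤ y →
      |(∑ i ∈ Finset.Icc 1 ⌊y⌋₊, (⌊y / (i : ℝ)⌋₊ : ℝ)) - y * Real.log y -
          (2 * Real.eulerMascheroniConstant - 1) * y| ≤ C * Real.sqrt y) ∧
    Tendsto (fun y : ℝ =>
        (∑ i ∈ Finset.Icc 1 ⌊y⌋₊, (⌊y / (i : ℝ)⌋₊ : ℝ)) / (y * Real.log y))
      atTop (nhds 1) := by
  refine ⟨Nat.card_pos_mul_le_eq_sum_floor_div x, ⟨8, abs_sum_floor_div_sub_le⟩,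
    tendsto_div_mul_log_of_sub_isBigO ?_⟩
  have hremainder : (fun y : ℝ => ∑ i ∈ Icc 1 ⌊y⌋₊, (⌊y / i⌋₊ : ℝ) - y * log y -
      (2 * eulerMascheroniConstant - 1) * y) =O[atTop] id := by
    refine IsBigO.of_bound 8 ?_
    filter_upwards [eventually_ge_atTop 1] with y hy
    rw [norm_eq_abs, id, norm_of_nonneg (by linarith)]
    exact (abs_sum_floor_div_sub_le y hy).trans (by gcongr; exact sqrt_le_self_iff.2 (.inr hy))
  simpa using hremainder.add (isBigO_const_mul_self (2 * eulerMascheroniConstant - 1) id atTop)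

/-- Dirichlet's divisor theorem: the number of pairs `(i₁, i₂)` of positive integers
with `i₁·i₂ ≤ x` equals `∑_{i=1}^{⌊x⌋} ⌊x/i⌋`; this sum satisfies
`|∑ ⌊x/i⌋ − x ln x − (2γ−1)x| = O(√x)` (with `γ` the Euler–Mascheroni constant),
and in particular it is asymptotic to `x ln x`. -/
theorem dirichlet_divisor (x : ℝ) (hx : 1 ≤ x) :
    (Nat.card {p : ℕ × ℕ // 0 < p.1 ∧ 0 < p.2 ∧ (p.1 * p.2 : ℝ) ≤ x} =
      ∑ i ∈ Finset.Icc 1 ⌊x⌋₊, ⌊x / (i : ℝ)⌋₊) ∧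
    (∃ C : ℝ, ∀ y : ℝ, 1 ≤ y →
      |(∑ i ∈ Finset.Icc 1 ⌊y⌋₊, (⌊y / (i : ℝ)⌋₊ : ℝ)) - y * Real.log y -
          (2 * Real.eulerMascheroniConstant - 1) * y| ≤ C * Real.sqrt y) ∧
    Tendsto (fun y : ℝ =>
        (∑ i ∈ Finset.Icc 1 ⌊y⌋₊, (⌊y / (i : ℝ)⌋₊ : ℝ)) / (y * Real.log y))
      atTop (nhds 1) :=
  dirichlet_divisor_general x
end

section
/- Number of nodes explored by threshold-pruned depth-first search: in the power-law model with β = 1, the number of prefixes (of any length ℓ ≤ L) whose NLL is at most σ equals ∑_{ℓ=1}^{L} N(σ, ℓ), where N(σ, ℓ) is the number of ℓ-tuples of positive integers with product at most e^{σ/α}. Hence the total work of the pruned tree search is ∑_{ℓ=1}^L N(σ, ℓ), which is asymptotically (as σ → ∞, L fixed) dominated by the leaf count N(σ, L), i.e., ∑_{ℓ=1}^L N(σ,ℓ) / N(σ,L) → 1. -/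
/-!
Taking logarithms, a prefix has NLL at most `σ` iff the product of its ranks is at most
`e^{σ/α}`, so both counts are `T(n, ℓ)`, the number of positive `ℓ`-tuples with product at
most `n = ⌊e^{σ/α}⌋`. Once the first `ℓ` entries `g` are fixed, the last one ranges over
`1, …, ⌊n / ∏ g⌋`, so `T(n, ℓ + 1) = ∑_g ⌊n / ∏ g⌋`. Summing `n / ∏ g` over
`g ∈ [1, n]^ℓ` gives `T(n, ℓ + 1) ≤ n H_n^ℓ ≤ n (2 log n)^ℓ`; keeping only `g ∈ [1, M]^ℓ`
with `M^{2ℓ} ≤ n < (M + 1)^{2ℓ}`, where `⌊n / ∏ g⌋ ≥ n / (2 ∏ g)`, gives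
`T(n, ℓ + 1) ≥ (n / 2) H_M^ℓ ≥ (n / 2) (log n / (2ℓ))^ℓ`. Hence
`T(n, ℓ) / T(n, L) = O(1 / log n)` for `1 ≤ ℓ < L`, and `n → ∞` as `σ → ∞`.
-/

open Finset Filter

/-- `N(σ, ℓ)`: the number of `ℓ`-tuples of positive integers with product at most
`e^{σ/α}` (power-law model with `β = 1`). -/
noncomputable def Npow (α σ : ℝ) (ℓ : ℕ) : ℕ :=
  Nat.card {f : Fin ℓ → ℕ // (∀ l, 0 < f l) ∧
    (∏ l, (f l : ℝ)) ≤ Real.exp (σ / α)}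

def tuplesProdLe (n ℓ : ℕ) : Finset (Fin ℓ → ℕ) :=
  {f ∈ Fintype.piFinset fun _ => Icc 1 n | ∏ l, f l ≤ n}

lemma mem_tuplesProdLe {n ℓ : ℕ} {f : Fin ℓ → ℕ} :
    f ∈ tuplesProdLe n ℓ ↔ (∀ l, 0 < f l) ∧ ∏ l, f l ≤ n := by
  simp only [tuplesProdLe, mem_filter, Fintype.mem_piFinset, mem_Icc]
  refine ⟨fun h => ⟨fun l => (h.1 l).1, h.2⟩, fun h => ⟨fun l => ⟨h.1 l, ?_⟩, h.2⟩⟩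
  exact (single_le_prod' (f := f) (fun i _ => h.1 i) (mem_univ l)).trans h.2

lemma card_tuplesProdLe_succ (n ℓ : ℕ) :
    #(tuplesProdLe n (ℓ + 1))
      = ∑ g ∈ Fintype.piFinset (fun _ : Fin ℓ => Icc 1 n), n / ∏ l, g l := by
  have hsplit : #(tuplesProdLe n (ℓ + 1)) = #({p ∈ Fintype.piFinset (fun _ : Fin ℓ => Icc 1 n)
      ×ˢ Icc 1 n | (∏ l, p.1 l) * p.2 ≤ n}) := by
    refine card_bij' (fun f _ => (Fin.init f, f (Fin.last ℓ))) (fun p _ => Fin.snoc p.1 p.2)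
      ?_ ?_ (by simp) (by simp)
    all_goals
      intro x hx
      simp only [tuplesProdLe, mem_filter, Fintype.mem_piFinset, mem_product,
        Fin.prod_univ_castSucc, Fin.forall_fin_succ', Fin.snoc_castSucc, Fin.snoc_last] at hx ⊢
      exact ⟨⟨hx.1.1, hx.1.2⟩, hx.2⟩
  rw [hsplit, card_filter, sum_product]
  refine sum_congr rfl fun g hg => ?_
  have hP : 0 < ∏ l, g l := prod_pos fun l _ => (mem_Icc.1 (Fintype.mem_piFinset.1 hg l)).1
  rw [← card_filter]
  calc _ = #(Icc 1 (n / ∏ l, g l)) := by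
        congr 1
        ext m
        simp only [mem_filter, mem_Icc, Nat.le_div_iff_mul_le hP, mul_comm m]
        exact ⟨fun h => ⟨h.1.1, h.2⟩,
          fun h => ⟨⟨h.1, le_trans (Nat.le_mul_of_pos_left m hP) h.2⟩, h.2⟩⟩
    _ = n / ∏ l, g l := by simp

lemma sum_prod_inv_piFinset_Icc (M ℓ : ℕ) :
    ∑ g ∈ Fintype.piFinset (fun _ : Fin ℓ => Icc 1 M), ∏ l, ((g l : ℝ))⁻¹
      = harmonic M ^ ℓ := by
  rw [sum_prod_piFinset (Icc 1 M) fun _ m => ((m : ℝ))⁻¹, harmonic_eq_sum_Icc]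
  simp

lemma Nat.div_two_le_cast_div {m n : ℕ} (hn : 0 < n) (h : 2 * n ≤ m) :
    (m : ℝ) / n / 2 ≤ (m / n : ℕ) := by
  have h1 : (m : ℝ) / n - 1 < (m / n : ℕ) := by
    simpa [Nat.floor_div_natCast] using Nat.sub_one_lt_floor ((m : ℝ) / n)
  have h2 : (2 : ℝ) ≤ m / n := by
    rw [le_div_iff₀ (by exact_mod_cast hn)]; exact_mod_cast h
  linarith

lemma card_tuplesProdLe_succ_le (n ℓ : ℕ) :
    (#(tuplesProdLe n (ℓ + 1)) : ℝ) ≤ n * harmonic n ^ ℓ := by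
  rw [card_tuplesProdLe_succ, Nat.cast_sum, ← sum_prod_inv_piFinset_Icc, mul_sum]
  refine sum_le_sum fun g _ => ?_
  calc ((n / ∏ l, g l : ℕ) : ℝ) ≤ n / ((∏ l, g l : ℕ) : ℝ) := Nat.cast_div_le
    _ = n * ∏ l, ((g l : ℝ))⁻¹ := by rw [Nat.cast_prod, div_eq_mul_inv, prod_inv_distrib]

lemma half_mul_harmonic_pow_le_card_tuplesProdLe {n ℓ M : ℕ} (h : 2 * M ^ ℓ ≤ n) :
    n / 2 * harmonic M ^ ℓ ≤ (#(tuplesProdLe n (ℓ + 1)) : ℝ) := by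
  rw [card_tuplesProdLe_succ, Nat.cast_sum, ← sum_prod_inv_piFinset_Icc, mul_sum]
  have hpos (g) (hg : g ∈ Fintype.piFinset fun _ : Fin ℓ => Icc 1 M) (l) : 0 < g l :=
    (mem_Icc.1 (Fintype.mem_piFinset.1 hg l)).1
  have hprod (g) (hg : g ∈ Fintype.piFinset fun _ : Fin ℓ => Icc 1 M) :
      2 * ∏ l, g l ≤ n := by
    refine le_trans (Nat.mul_le_mul_left 2 ?_) h
    simpa using prod_le_prod' (s := univ) fun l _ =>
      (mem_Icc.1 (Fintype.mem_piFinset.1 hg l)).2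
  have hsub : Fintype.piFinset (fun _ : Fin ℓ => Icc 1 M) ⊆ Fintype.piFinset fun _ => Icc 1 n := by
    intro g hg
    refine Fintype.mem_piFinset.2 fun l => mem_Icc.2 ⟨hpos g hg l, ?_⟩
    have := single_le_prod' (f := g) (fun i _ => hpos g hg i) (mem_univ l)
    have := hprod g hg
    omega
  refine le_trans ?_ (sum_le_sum_of_subset_of_nonneg hsub fun _ _ _ => by positivity)
  refine sum_le_sum fun g hg => ?_
  calc (n : ℝ) / 2 * ∏ l, ((g l : ℝ))⁻¹ = n / ((∏ l, g l : ℕ) : ℝ) / 2 := by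
        rw [Nat.cast_prod, div_eq_mul_inv _ (∏ l, _ : ℝ), prod_inv_distrib]; ring
    _ ≤ _ := Nat.div_two_le_cast_div (prod_pos fun l _ => hpos g hg l) (hprod g hg)

lemma Nat.exists_pow_le_lt_succ_pow (n : ℕ) {k : ℕ} (hk : k ≠ 0) :
    ∃ M, M ^ k ≤ n ∧ n < (M + 1) ^ k := by
  refine ⟨Nat.findGreatest (fun M => M ^ k ≤ n) n,
    Nat.findGreatest_spec (P := fun M => M ^ k ≤ n) (zero_le n) (by simp [zero_pow hk]), ?_⟩
  by_contra! h
  by_cases hM : Nat.findGreatest (fun M => M ^ k ≤ n) n + 1 ≤ n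
  · exact Nat.findGreatest_is_greatest (Nat.lt_succ_self _) hM h
  · have := Nat.le_self_pow hk (Nat.findGreatest (fun M => M ^ k ≤ n) n + 1)
    omega

lemma one_le_log_of_three_le {n : ℕ} (hn : 3 ≤ n) : 1 ≤ Real.log n := by
  rw [Real.le_log_iff_exp_le (by exact_mod_cast (by omega : 0 < n))]
  exact Real.exp_one_lt_three.le.trans (by exact_mod_cast hn)

lemma card_tuplesProdLe_succ_le_log_pow {n : ℕ} (hn : 3 ≤ n) (ℓ : ℕ) :
    (#(tuplesProdLe n (ℓ + 1)) : ℝ) ≤ n * (2 * Real.log n) ^ ℓ := by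
  have hlog := one_le_log_of_three_le hn
  refine (card_tuplesProdLe_succ_le n ℓ).trans (mul_le_mul_of_nonneg_left ?_ (by positivity))
  refine pow_le_pow_left₀ (by exact_mod_cast (harmonic_pos (by omega : n ≠ 0)).le) ?_ ℓ
  linarith [harmonic_le_one_add_log n]

lemma log_pow_le_card_tuplesProdLe {n K : ℕ} (hn : 4 ≤ n) (hK : K ≠ 0) :
    n / 2 * (Real.log n / (2 * K)) ^ K ≤ (#(tuplesProdLe n (K + 1)) : ℝ) := by
  obtain ⟨M, hMn, hnM⟩ := Nat.exists_pow_le_lt_succ_pow n (mul_ne_zero two_ne_zero hK)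
  have h2M : 2 * M ^ K ≤ n := by
    rw [pow_mul', sq] at hMn
    nlinarith
  have hlog : Real.log n / (2 * K) ≤ harmonic M := by
    have hlogn : Real.log n ≤ (2 * K : ℕ) * Real.log ↑(M + 1) := by
      rw [← Real.log_pow]
      exact Real.log_le_log (by exact_mod_cast (by omega : 0 < n)) (by exact_mod_cast hnM.le)
    have hH := log_add_one_le_harmonic M
    push_cast at hlogn hH
    rw [div_le_iff₀ (by positivity)]
    nlinarith
  refine le_trans ?_ (half_mul_harmonic_pow_le_card_tuplesProdLe h2M)
  gcongr

lemma card_tuplesProdLe_div_card_le {n K ℓ : ℕ} (hn : 4 ≤ n) (hℓ : ℓ ∈ Icc 1 K) :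
    (#(tuplesProdLe n ℓ) : ℝ) / #(tuplesProdLe n (K + 1))
      ≤ 2 ^ K * (2 * K) ^ K / Real.log n := by
  obtain ⟨⟨j, rfl⟩, hjK⟩ : (∃ j, ℓ = j + 1) ∧ ℓ ≤ K :=
    ⟨⟨ℓ - 1, by have := (mem_Icc.1 hℓ).1; omega⟩, (mem_Icc.1 hℓ).2⟩
  obtain ⟨k, rfl⟩ : ∃ k, K = k + 1 := ⟨K - 1, by omega⟩
  have hlog := one_le_log_of_three_le (by omega : 3 ≤ n)
  have hn0 : (0 : ℝ) < n := by exact_mod_cast (by omega : 0 < n)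
  have hnum : (#(tuplesProdLe n (j + 1)) : ℝ) ≤ n * (2 * Real.log n) ^ k :=
    (card_tuplesProdLe_succ_le_log_pow (by omega) j).trans <|
      mul_le_mul_of_nonneg_left (pow_le_pow_right₀ (by linarith) (by omega)) hn0.le
  have hden := log_pow_le_card_tuplesProdLe hn k.succ_ne_zero
  calc (#(tuplesProdLe n (j + 1)) : ℝ) / #(tuplesProdLe n (k + 1 + 1))
      ≤ n * (2 * Real.log n) ^ k / (n / 2 * (Real.log n / (2 * ↑(k + 1))) ^ (k + 1)) :=
        div_le_div₀ (by positivity) hnum (by positivity) hden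
    _ = 2 ^ (k + 1) * (2 * ↑(k + 1)) ^ (k + 1) / Real.log n := by
        have : Real.log n ≠ 0 := by positivity
        rw [div_pow, mul_pow, pow_succ (Real.log n), pow_succ 2]
        field_simp

lemma tendsto_card_tuplesProdLe_div_card {K ℓ : ℕ} (hℓ : ℓ ∈ Icc 1 K) :
    Tendsto (fun n => (#(tuplesProdLe n ℓ) : ℝ) / #(tuplesProdLe n (K + 1))) atTop (nhds 0) :=
  tendsto_of_tendsto_of_tendsto_of_le_of_le' tendsto_const_nhds
    (tendsto_const_nhds.div_atTop (Real.tendsto_log_atTop.comp tendsto_natCast_atTop_atTop))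
    (Eventually.of_forall fun _ => by positivity)
    ((eventually_ge_atTop 4).mono fun _ hn => card_tuplesProdLe_div_card_le hn hℓ)

lemma card_tuplesProdLe_pos {n : ℕ} (hn : 1 ≤ n) (ℓ : ℕ) : 0 < #(tuplesProdLe n ℓ) :=
  card_pos.2 ⟨fun _ => 1, by simp [tuplesProdLe, hn]⟩

lemma tendsto_sum_card_tuplesProdLe_div_card {L : ℕ} (hL : 1 ≤ L) :
    Tendsto (fun n => (∑ ℓ ∈ Icc 1 L, (#(tuplesProdLe n ℓ) : ℝ)) / #(tuplesProdLe n L))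
      atTop (nhds 1) := by
  obtain ⟨K, rfl⟩ : ∃ K, L = K + 1 := ⟨L - 1, by omega⟩
  have hlower := tendsto_const_nhds (x := (1 : ℝ)).add <|
    tendsto_finsetSum (Icc 1 K) fun ℓ hℓ => tendsto_card_tuplesProdLe_div_card hℓ
  rw [sum_const_zero, add_zero] at hlower
  refine hlower.congr' <| (eventually_ge_atTop 1).mono fun n hn => ?_
  have hpos : (0 : ℝ) < #(tuplesProdLe n (K + 1)) := by exact_mod_cast card_tuplesProdLe_pos hn _
  dsimp only
  rw [sum_div, sum_Icc_succ_top (by omega), div_self hpos.ne', add_comm]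

lemma mul_sum_log_le_iff_prod_le_exp {ι : Type*} {s : Finset ι} {x : ι → ℝ}
    (hx : ∀ i ∈ s, 0 < x i) {α σ : ℝ} (hα : 0 < α) :
    α * ∑ i ∈ s, Real.log (x i) ≤ σ ↔ ∏ i ∈ s, x i ≤ Real.exp (σ / α) := by
  rw [← Real.log_prod fun i hi => (hx i hi).ne', mul_comm, ← le_div_iff₀ hα]
  exact Real.log_le_iff_le_exp (prod_pos hx)

lemma natCard_prod_le_eq_card_tuplesProdLe {x : ℝ} (hx : 0 ≤ x) (ℓ : ℕ) :
    Nat.card {f : Fin ℓ → ℕ // (∀ l, 0 < f l) ∧ ∏ l, (f l : ℝ) ≤ x}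
      = #(tuplesProdLe ⌊x⌋₊ ℓ) := by
  rw [← Nat.card_eq_finsetCard]
  refine Nat.card_congr (Equiv.subtypeEquivRight fun f => ?_)
  rw [mem_tuplesProdLe, Nat.le_floor_iff hx]
  push_cast
  rfl

/-- Work of threshold-pruned DFS: for each length `ℓ`, the number of prefixes
`(i_1,...,i_ℓ)` with NLL `α·∑ ln i_j ≤ σ` equals `N(σ, ℓ)`; hence the total number
of explored nodes is `∑_{ℓ=1}^L N(σ, ℓ)`, and this total is asymptotically dominated
by the leaf count: `∑_{ℓ=1}^L N(σ,ℓ) / N(σ,L) → 1` as `σ → ∞` (fixed `L`). -/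
theorem pruned_dfs_node_count (α : ℝ) (hα : 0 < α) (L : ℕ) (hL : 1 ≤ L) :
    (∀ σ : ℝ, ∀ ℓ : ℕ,
      Nat.card {f : Fin ℓ → ℕ // (∀ l, 0 < f l) ∧
        α * ∑ l, Real.log (f l) ≤ σ} = Npow α σ ℓ) ∧
    Tendsto (fun σ : ℝ =>
        (∑ ℓ ∈ Finset.Icc 1 L, (Npow α σ ℓ : ℝ)) / (Npow α σ L : ℝ))
      atTop (nhds 1) := by
  refine ⟨fun σ ℓ => Nat.card_congr <| Equiv.subtypeEquivRight fun f => and_congr_right fun hf =>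
    mul_sum_log_le_iff_prod_le_exp (fun l _ => by exact_mod_cast hf l) hα, ?_⟩
  have hNpow (σ : ℝ) (ℓ : ℕ) : Npow α σ ℓ = #(tuplesProdLe ⌊Real.exp (σ / α)⌋₊ ℓ) :=
    natCard_prod_le_eq_card_tuplesProdLe (Real.exp_pos _).le ℓ
  simp only [hNpow]
  exact (tendsto_sum_card_tuplesProdLe_div_card hL).comp <| tendsto_nat_floor_atTop.comp <|
    Real.tendsto_exp_atTop.comp (tendsto_id.atTop_div_const hα)
end
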